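/- (Báez-Duarte asymptotic formula) Let f(z) = ∑_{n≥0} a_n z^n be a strongly Gaussian power series in the class K with radius of convergence R > 0. Suppose m̃ : (0,R) → ℝ and σ̃ : (0,R) → ℝ are functions such that: m̃ is continuous and increasing with lim_{t↑R} m̃(t) = +∞; σ̃(t) ~ σ_f(t) as t↑R; and lim_{t↑R} (m̃(t) − m_f(t))/σ_f(t) = 0. Then for any sequence (τ_n) in (0,R) with m̃(τ_n) = n for each n, one has a_n ~ f(τ_n)/(√(2π) · σ̃(τ_n) · τ_n^n) as n → ∞. -/

import Mathlib

open Filter Topology MeasureTheory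
open scoped ENNReal NNReal Classical

noncomputable section

/-- `psum a t = ∑ aₙ tⁿ`, the value `f(t)` of the power series with coefficients `a`. -/
def psum (a : ℕ → ℝ) (t : ℝ) : ℝ := ∑' n : ℕ, a n * t ^ n

/-- The mean `m_f(t)` of the Khinchin family of the power series with coefficients `a`. -/
def meanK (a : ℕ → ℝ) (t : ℝ) : ℝ :=
  (∑' n : ℕ, (n : ℝ) * a n * t ^ n) / ∑' n : ℕ, a n * t ^ n

/-- The variance `σ_f²(t)` of the Khinchin family. -/
def varK (a : ℕ → ℝ) (t : ℝ) : ℝ :=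
  (∑' n : ℕ, (n : ℝ) ^ 2 * a n * t ^ n) / (∑' n : ℕ, a n * t ^ n) - meanK a t ^ 2

/-- The standard deviation `σ_f(t)` of the Khinchin family. -/
def sdK (a : ℕ → ℝ) (t : ℝ) : ℝ := Real.sqrt (varK a t)

/-- The moment `E(X_t^p)` of real exponent `p` of the Khinchin family. -/
def momK (a : ℕ → ℝ) (p : ℝ) (t : ℝ) : ℝ :=
  (∑' n : ℕ, (n : ℝ) ^ p * a n * t ^ n) / ∑' n : ℕ, a n * t ^ n

/-- The filter of `t ↑ R`: `atTop` when `R = ∞`, and `𝓝[<] R` when `R < ∞`. -/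
def nhdsUpto (R : ℝ≥0∞) : Filter ℝ :=
  if R = ⊤ then atTop else nhdsWithin R.toReal (Set.Iio R.toReal)

/-- The power series `f` evaluated at a complex argument. -/
def Fc (a : ℕ → ℝ) (z : ℂ) : ℂ := ∑' n : ℕ, (a n : ℂ) * z ^ n

/-- The characteristic function `E(e^{iθ X̌_t})` of the normalized Khinchin variable:
`(f(t e^{iθ/σ_f(t)})/f(t)) · e^{-iθ m_f(t)/σ_f(t)}`. -/
def charN (a : ℕ → ℝ) (t θ : ℝ) : ℂ :=
  Fc a ((t : ℂ) * Complex.exp (Complex.I * ((θ / sdK a t : ℝ) : ℂ))) / Fc a (t : ℂ) *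
    Complex.exp (-Complex.I * ((θ * meanK a t / sdK a t : ℝ) : ℂ))

/-- `f` is strongly Gaussian: `σ_f(t) → ∞` and
`∫_{|θ|≤πσ_f(t)} |E(e^{iθX̌_t}) - e^{-θ²/2}| dθ → 0` as `t ↑ R`. -/
def StronglyGaussian (a : ℕ → ℝ) (R : ℝ≥0∞) : Prop :=
  Tendsto (sdK a) (nhdsUpto R) atTop ∧
    Tendsto (fun t => ∫ θ in (-(Real.pi * sdK a t))..(Real.pi * sdK a t),
        ‖charN a t θ - ((Real.exp (-θ ^ 2 / 2) : ℝ) : ℂ)‖) (nhdsUpto R) (𝓝 0)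

/-!
Cauchy's formula gives `2π aₙ tⁿ / f(t) = f(t)⁻¹ ∫_{-π}^{π} f(t e^{iθ}) e^{-inθ} dθ`, and the
substitution `θ = x / σ_f(t)` turns the right-hand side into
`σ_f(t)⁻¹ ∫_{|x| ≤ πσ_f(t)} E(e^{ixX̌_t}) e^{-iδx} dx` with `δ = (n - m_f(t)) / σ_f(t)`.
At `t = τₙ` strong Gaussianity replaces the characteristic function by `e^{-x²/2}` at a cost `o(1)`,
and since `m̃(τₙ) = n` forces `δ → 0`, dropping the factor `e^{-iδx}` costs at most
`|δ| ∫ |x| e^{-x²/2} dx = o(1)`. Hence `2π σ_f(τₙ) aₙ τₙⁿ / f(τₙ) → ∫ e^{-x²/2} dx = √(2π)`,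
and `σ̃ ~ σ_f` gives the formula.
-/

open scoped Real Complex
open Complex (I)

lemma Fc_ofReal (a : ℕ → ℝ) (t : ℝ) : Fc a t = psum a t := by
  rw [Fc, psum, Complex.ofReal_tsum]
  exact tsum_congr fun n => by push_cast; rfl

lemma integral_exp_int_mul_mul_I (m : ℤ) :
    ∫ θ in (-π)..π, cexp (m * θ * I) = if m = 0 then (2 * π : ℂ) else 0 := by
  split_ifs with hm
  · simp [hm]; ring
  have hmI : (m : ℂ) * I ≠ 0 := by simp [hm]
  simp only [mul_right_comm _ _ I]
  rw [integral_exp_mul_complex hmI, div_eq_zero_iff, sub_eq_zero]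
  left
  rw [show (m : ℂ) * I * ↑π = m * I * ↑(-π) + m * (2 * π * I) by push_cast; ring,
    Complex.exp_add, Complex.exp_int_mul_two_pi_mul_I, mul_one]

lemma integral_Fc_circle_mul_exp_neg (a : ℕ → ℝ) {t : ℝ} (hs : Summable fun k => |a k * t ^ k|)
    (n : ℕ) :
    ∫ θ in (-π)..π, Fc a (t * cexp (I * θ)) * cexp (-I * (n * θ)) = 2 * π * a n * t ^ n := by
  let F : ℕ → ℝ → ℂ := fun k θ => (a k * t ^ k : ℝ) * cexp ((k - n : ℤ) * θ * I)
  have hterm : ∀ θ : ℝ, Fc a (t * cexp (I * θ)) * cexp (-I * (n * θ)) = ∑' k, F k θ := by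
    intro θ
    rw [Fc, ← tsum_mul_right]
    refine tsum_congr fun k => ?_
    simp only [F]
    rw [mul_pow, ← Complex.exp_nat_mul, mul_assoc, mul_assoc, ← Complex.exp_add]
    push_cast
    ring_nf
  have hnorm : ∀ k θ, ‖F k θ‖ = |a k * t ^ k| := by
    intro k θ
    simp [F, Complex.norm_exp]
  have hπ : -π ≤ π := by linarith [Real.pi_pos]
  have hint : ∀ k, ∫ θ in (-π)..π, F k θ = if k = n then (2 * π * a n * t ^ n : ℂ) else 0 := by
    intro k
    rw [intervalIntegral.integral_const_mul, integral_exp_int_mul_mul_I]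
    by_cases hk : k = n
    · simp [hk]; ring
    · have hkn : (k : ℤ) - n ≠ 0 := sub_ne_zero.2 (by exact_mod_cast hk)
      simp [hk, hkn]
  calc ∫ θ in (-π)..π, Fc a (t * cexp (I * θ)) * cexp (-I * (n * θ))
      = ∫ θ in Set.Ioc (-π) π, ∑' k, F k θ := by
        rw [intervalIntegral.integral_of_le hπ]; exact setIntegral_congr_fun measurableSet_Ioc
          fun θ _ => hterm θ
    _ = ∑' k, ∫ θ in Set.Ioc (-π) π, F k θ := by
        refine (integral_tsum_of_summable_integral_norm (fun k => ?_) ?_).symm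
        · exact (Continuous.integrableOn_Ioc (by fun_prop))
        · simp only [hnorm, setIntegral_const, smul_eq_mul]
          exact hs.mul_left _
    _ = 2 * π * a n * t ^ n := by
        simp only [← intervalIntegral.integral_of_le hπ, hint]
        exact tsum_ite_eq n _

lemma sdK_nonneg (a : ℕ → ℝ) (t : ℝ) : 0 ≤ sdK a t := Real.sqrt_nonneg _

lemma continuous_Fc_circle (a : ℕ → ℝ) {t : ℝ} (hs : Summable fun k => |a k * t ^ k|) :
    Continuous fun θ : ℝ => Fc a (t * cexp (I * θ)) := by
  refine continuous_tsum (fun k => by fun_prop) hs fun k θ => ?_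
  simp [Complex.norm_exp, abs_mul]

lemma continuous_charN (a : ℕ → ℝ) {t : ℝ} (hs : Summable fun k => |a k * t ^ k|) :
    Continuous (charN a t) :=
  (((continuous_Fc_circle a hs).comp (continuous_id.div_const _)).div_const _).mul (by fun_prop)

lemma integral_charN_mul_exp (a : ℕ → ℝ) {t : ℝ} (hs : Summable fun k => |a k * t ^ k|) (n : ℕ)
    (hσ : sdK a t ≠ 0) :
    ∫ x in (-(π * sdK a t))..(π * sdK a t),
        charN a t x * cexp (-I * (((n - meanK a t) / sdK a t * x : ℝ) : ℂ))
      = (2 * π * sdK a t * (a n * t ^ n) / psum a t : ℝ) := by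
  have hsubst : ∀ θ : ℝ, charN a t (θ * sdK a t) *
        cexp (-I * (((n - meanK a t) / sdK a t * (θ * sdK a t) : ℝ) : ℂ))
      = Fc a (t * cexp (I * θ)) * cexp (-I * (n * θ)) / psum a t := by
    intro θ
    rw [charN, mul_div_cancel_right₀ θ hσ, Fc_ofReal, div_mul_eq_mul_div, div_mul_eq_mul_div,
      mul_assoc, ← Complex.exp_add]
    congr 3
    field_simp
    push_cast
    ring
  rw [show -(π * sdK a t) = -π * sdK a t by ring, ← intervalIntegral.smul_integral_comp_mul_right]
  simp only [hsubst, intervalIntegral.integral_div, integral_Fc_circle_mul_exp_neg a hs,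
    Complex.real_smul]
  push_cast
  ring

lemma norm_mul_exp_sub_le (z w : ℂ) (r : ℝ) :
    ‖z * cexp (-I * r) - w‖ ≤ ‖z - w‖ + ‖w‖ * |r| := by
  have hexp : ‖cexp (-I * r) - 1‖ ≤ |r| := by
    simpa using Real.norm_exp_I_mul_ofReal_sub_one_le (x := -r)
  calc ‖z * cexp (-I * r) - w‖ = ‖(z - w) * cexp (-I * r) + w * (cexp (-I * r) - 1)‖ := by
        ring_nf
    _ ≤ ‖z - w‖ + ‖w‖ * |r| := by
        refine (norm_add_le _ _).trans (add_le_add ?_ ?_)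
        · rw [norm_mul, Complex.norm_exp]; simp
        · rw [norm_mul]; gcongr

lemma integrable_abs_mul_exp_neg_sq_div_two :
    Integrable fun x : ℝ => |x| * rexp (-x ^ 2 / 2) := by
  refine (integrable_mul_exp_neg_mul_sq one_half_pos).abs.congr (.of_forall fun x => ?_)
  simp only [abs_mul, Real.abs_exp]
  ring_nf

lemma norm_integral_mul_exp_sub_integral_gauss_le {φ : ℝ → ℂ} {L : ℝ} (hL : 0 ≤ L)
    (hφ : IntervalIntegrable φ volume (-L) L) (δ : ℝ) :
    ‖(∫ x in (-L)..L, φ x * cexp (-I * (δ * x : ℝ)))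
        - ((∫ x in (-L)..L, rexp (-x ^ 2 / 2) : ℝ) : ℂ)‖
      ≤ (∫ x in (-L)..L, ‖φ x - (rexp (-x ^ 2 / 2) : ℝ)‖)
        + |δ| * ∫ x, |x| * rexp (-x ^ 2 / 2) := by
  have hLL : -L ≤ L := by linarith
  have hpoint : ∀ x, ‖φ x * cexp (-I * (δ * x : ℝ)) - (rexp (-x ^ 2 / 2) : ℝ)‖
      ≤ ‖φ x - (rexp (-x ^ 2 / 2) : ℝ)‖ + |δ| * (|x| * rexp (-x ^ 2 / 2)) := by
    intro x
    refine (norm_mul_exp_sub_le _ _ _).trans_eq ?_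
    rw [Complex.norm_real, Real.norm_of_nonneg (Real.exp_pos _).le, abs_mul]
    ring
  have hgauss : IntervalIntegrable (fun x : ℝ => ((rexp (-x ^ 2 / 2) : ℝ) : ℂ)) volume (-L) L :=
    (by fun_prop : Continuous fun x : ℝ => ((rexp (-x ^ 2 / 2) : ℝ) : ℂ)).intervalIntegrable _ _
  have hφe : IntervalIntegrable (fun x => φ x * cexp (-I * (δ * x : ℝ))) volume (-L) L :=
    hφ.mul_continuousOn (by fun_prop)
  have hmoment : IntervalIntegrable (fun x => |δ| * (|x| * rexp (-x ^ 2 / 2))) volume (-L) L :=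
    (by fun_prop : Continuous fun x : ℝ => |δ| * (|x| * rexp (-x ^ 2 / 2))).intervalIntegrable _ _
  rw [← intervalIntegral.integral_ofReal, ← intervalIntegral.integral_sub hφe hgauss]
  calc _ ≤ ∫ x in (-L)..L, ‖φ x * cexp (-I * (δ * x : ℝ)) - (rexp (-x ^ 2 / 2) : ℝ)‖ :=
        intervalIntegral.norm_integral_le_integral_norm hLL
    _ ≤ ∫ x in (-L)..L, ‖φ x - (rexp (-x ^ 2 / 2) : ℝ)‖ + |δ| * (|x| * rexp (-x ^ 2 / 2)) :=
        intervalIntegral.integral_mono_on hLL (hφe.sub hgauss).norm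
          ((hφ.sub hgauss).norm.add hmoment) fun x _ => hpoint x
    _ ≤ _ := by
        rw [intervalIntegral.integral_add (hφ.sub hgauss).norm hmoment,
          intervalIntegral.integral_const_mul]
        gcongr
        rw [intervalIntegral.integral_of_le hLL]
        exact setIntegral_le_integral integrable_abs_mul_exp_neg_sq_div_two
          (.of_forall fun x => by positivity)

lemma abs_two_pi_coeff_sub_integral_gauss_le (a : ℕ → ℝ) {t : ℝ}
    (hs : Summable fun k => |a k * t ^ k|) (n : ℕ) (hσ : sdK a t ≠ 0) :
    |2 * π * sdK a t * (a n * t ^ n) / psum a t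
        - ∫ x in (-(π * sdK a t))..(π * sdK a t), rexp (-x ^ 2 / 2)|
      ≤ (∫ x in (-(π * sdK a t))..(π * sdK a t), ‖charN a t x - (rexp (-x ^ 2 / 2) : ℝ)‖)
        + |(n - meanK a t) / sdK a t| * ∫ x, |x| * rexp (-x ^ 2 / 2) := by
  have h := norm_integral_mul_exp_sub_integral_gauss_le
    (mul_nonneg Real.pi_pos.le (sdK_nonneg a t))
    ((continuous_charN a hs).intervalIntegrable _ _) ((n - meanK a t) / sdK a t)
  rwa [integral_charN_mul_exp a hs n hσ, ← Complex.ofReal_sub, Complex.norm_real,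
    Real.norm_eq_abs] at h

lemma tendsto_integral_exp_neg_sq_div_two {ι : Type*} {l : Filter ι} [l.IsCountablyGenerated]
    {L : ι → ℝ} (hL : Tendsto L l atTop) :
    Tendsto (fun i => ∫ x in (-L i)..(L i), rexp (-x ^ 2 / 2)) l (𝓝 √(2 * π)) := by
  have hform : (fun x : ℝ => rexp (-x ^ 2 / 2)) = fun x => rexp (-(1 / 2) * x ^ 2) := by
    ext x; ring_nf
  have hval : ∫ x : ℝ, rexp (-x ^ 2 / 2) = √(2 * π) := by
    rw [hform, integral_gaussian]; ring_nf
  rw [← hval]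
  exact intervalIntegral_tendsto_integral (hform ▸ integrable_exp_neg_mul_sq one_half_pos)
    (tendsto_neg_atBot_iff.2 hL) hL

lemma tendsto_sqrt_two_pi_mul_sdK_mul_coeff_div_psum (a : ℕ → ℝ) {R : ℝ≥0∞}
    (hSG : StronglyGaussian a R) {τ : ℕ → ℝ} (hτ : Tendsto τ atTop (nhdsUpto R))
    (hs : ∀ n, Summable fun k => |a k * τ n ^ k|)
    (hδ : Tendsto (fun n : ℕ => (n - meanK a (τ n)) / sdK a (τ n)) atTop (𝓝 0)) :
    Tendsto (fun n => √(2 * π) * sdK a (τ n) * (a n * τ n ^ n) / psum a (τ n)) atTop (𝓝 1) := by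
  have hσ : Tendsto (fun n => sdK a (τ n)) atTop atTop := hSG.1.comp hτ
  have hgauss := tendsto_integral_exp_neg_sq_div_two (hσ.const_mul_atTop Real.pi_pos)
  have herr : Tendsto (fun n =>
      (∫ x in (-(π * sdK a (τ n)))..(π * sdK a (τ n)),
          ‖charN a (τ n) x - (rexp (-x ^ 2 / 2) : ℝ)‖)
        + |(n - meanK a (τ n)) / sdK a (τ n)| * ∫ x, |x| * rexp (-x ^ 2 / 2)) atTop (𝓝 0) := by
    simpa using (hSG.2.comp hτ).add (hδ.abs.mul_const _)
  have hcoeff : Tendsto (fun n => 2 * π * sdK a (τ n) * (a n * τ n ^ n) / psum a (τ n))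
      atTop (𝓝 √(2 * π)) := by
    have hdiff := squeeze_zero_norm' (hσ.eventually_gt_atTop 0 |>.mono fun n hn => by
      rw [Real.norm_eq_abs]; exact abs_two_pi_coeff_sub_integral_gauss_le a (hs n) n hn.ne') herr
    simpa using hdiff.add hgauss
  convert hcoeff.div_const √(2 * π) using 1
  · ext n
    field_simp
    rw [Real.sq_sqrt (by positivity)]
  · rw [div_self (by positivity : √(2 * π) ≠ 0)]

lemma tendsto_nhdsUpto {ι : Type*} {l : Filter ι} {R : ℝ≥0∞} (hR : 0 < R) {τ : ι → ℝ}
    (hτR : ∀ i, ENNReal.ofReal (τ i) < R)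
    (hgt : ∀ t, 0 < t → ENNReal.ofReal t < R → ∀ᶠ i in l, t < τ i) :
    Tendsto τ l (nhdsUpto R) := by
  rw [nhdsUpto]
  split_ifs with htop
  · exact tendsto_atTop.2 fun b => (hgt (max b 1) (by positivity) (by simp [htop])).mono
      fun i hi => (le_max_left _ _).trans hi.le
  have hR' : 0 < R.toReal := ENNReal.toReal_pos hR.ne' htop
  have hlt : ∀ i, τ i < R.toReal := fun i => by
    have := hτR i
    rw [← ENNReal.ofReal_toReal htop, ENNReal.ofReal_lt_ofReal_iff'] at this
    exact this.1
  refine tendsto_nhdsWithin_iff.2 ⟨tendsto_order.2 ⟨fun b hb => ?_,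
    fun b hb => .of_forall fun i => (hlt i).trans hb⟩, .of_forall hlt⟩
  have hmax : max b (R.toReal / 2) < R.toReal := max_lt hb (by linarith)
  have hpos : 0 < max b (R.toReal / 2) := lt_max_of_lt_right (by positivity)
  exact (hgt _ hpos ((ENNReal.ofReal_lt_iff_lt_toReal hpos.le htop).2 hmax)).mono
    fun i hi => (le_max_left _ _).trans_lt hi

theorem statement14_general (a : ℕ → ℝ) (R : ℝ≥0∞) (hR : 0 < R)
    (hconv : ∀ t : ℝ, 0 ≤ t → ENNReal.ofReal t < R → Summable fun n => a n * t ^ n)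
    (hSG : StronglyGaussian a R)
    (mt st : ℝ → ℝ)
    (hmono : StrictMonoOn mt {t : ℝ | 0 < t ∧ ENNReal.ofReal t < R})
    (hst : Tendsto (fun t => st t / sdK a t) (nhdsUpto R) (𝓝 1))
    (happrox : Tendsto (fun t => (mt t - meanK a t) / sdK a t) (nhdsUpto R) (𝓝 0)) :
    ∀ τ : ℕ → ℝ,
      (∀ n : ℕ, (0 < τ n ∧ ENNReal.ofReal (τ n) < R) ∧ mt (τ n) = (n : ℝ)) →
      Tendsto
        (fun n : ℕ =>
          a n * Real.sqrt (2 * Real.pi) * st (τ n) * τ n ^ n / psum a (τ n))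
        atTop (𝓝 1) := by
  intro τ hτ
  have hτR : Tendsto τ atTop (nhdsUpto R) := by
    refine tendsto_nhdsUpto hR (fun n => (hτ n).1.2) fun t ht htR => ?_
    filter_upwards [eventually_gt_atTop ⌈mt t⌉₊] with n hn
    refine (hmono.lt_iff_lt ⟨ht, htR⟩ (hτ n).1).1 ?_
    rw [(hτ n).2]
    exact (Nat.le_ceil _).trans_lt (by exact_mod_cast hn)
  have hδ : Tendsto (fun n : ℕ => (n - meanK a (τ n)) / sdK a (τ n)) atTop (𝓝 0) :=
    (happrox.comp hτR).congr fun n => by simp [(hτ n).2]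
  have hlocal := tendsto_sqrt_two_pi_mul_sdK_mul_coeff_div_psum a hSG hτR
    (fun n => (hconv _ (hτ n).1.1.le (hτ n).1.2).abs) hδ
  have hlim := hlocal.mul (hst.comp hτR)
  rw [mul_one] at hlim
  refine hlim.congr' ?_
  filter_upwards [(hSG.1.comp hτR).eventually_gt_atTop 0] with n hσ
  simp only [Function.comp_apply] at hσ ⊢
  field_simp

/-- Báez-Duarte asymptotic formula, Theorem 3.2.8. Let `f ∈ K` with
radius of convergence `R > 0` be strongly Gaussian, and let `mt, st : (0,R) → ℝ` with `mt`
continuous and (strictly) increasing tending to `+∞` as `t ↑ R`, `st(t) ~ σ_f(t)`, and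
`(mt(t) − m_f(t))/σ_f(t) → 0` as `t ↑ R`. Then for any sequence `(τ n)` in `(0,R)` with
`mt (τ n) = n` for each `n`, one has `a_n ~ f(τ_n)/(√(2π)·st(τ_n)·τ_nⁿ)` as `n → ∞`. -/
theorem statement14 (a : ℕ → ℝ) (R : ℝ≥0∞) (hR : 0 < R)
    (hpos : ∀ n, 0 ≤ a n) (ha0 : 0 < a 0) (ha1 : ∃ n, 1 ≤ n ∧ 0 < a n)
    (hconv : ∀ t : ℝ, 0 ≤ t → ENNReal.ofReal t < R → Summable fun n => a n * t ^ n)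
    (hdiv : ∀ t : ℝ, R < ENNReal.ofReal t → ¬ Summable fun n => a n * t ^ n)
    (hSG : StronglyGaussian a R)
    (mt st : ℝ → ℝ)
    (hmono : StrictMonoOn mt {t : ℝ | 0 < t ∧ ENNReal.ofReal t < R})
    (hcont : ContinuousOn mt {t : ℝ | 0 < t ∧ ENNReal.ofReal t < R})
    (hmtop : Tendsto mt (nhdsUpto R) atTop)
    (hst : Tendsto (fun t => st t / sdK a t) (nhdsUpto R) (𝓝 1))
    (happrox : Tendsto (fun t => (mt t - meanK a t) / sdK a t) (nhdsUpto R) (𝓝 0)) :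
    ∀ τ : ℕ → ℝ,
      (∀ n : ℕ, (0 < τ n ∧ ENNReal.ofReal (τ n) < R) ∧ mt (τ n) = (n : ℝ)) →
      Tendsto
        (fun n : ℕ =>
          a n * Real.sqrt (2 * Real.pi) * st (τ n) * τ n ^ n / psum a (τ n))
        atTop (𝓝 1) :=
  statement14_general a R hR hconv hSG mt st hmono hst happrox
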